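/- Let R₁, R₂ be nonnegative integrable real random variables with R₁ ≼st R₂, and let V be an integrable real random variable independent of R₁ and independent of R₂ with E[V] = 0. Then R₁V ≼cx R₂V, i.e., E[f(R₁V)] ≤ E[f(R₂V)] for every convex function f : ℝ → ℝ such that both f(R₁V) and f(R₂V) are integrable. -/

import Mathlib

open MeasureTheory ProbabilityTheory Filter

/-- Usual stochastic order for real random variables:
`P(U > t) ≤ P(V > t)` for all `t ∈ ℝ`. -/
def StOrder {Ω : Type*} [MeasurableSpace Ω] (μ : Measure Ω) (U V : Ω → ℝ) : Prop :=
  ∀ t : ℝ, μ {ω | t < U ω} ≤ μ {ω | t < V ω}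

/-!
Subtracting from `f` its supporting line at `0` changes neither side, because
`E[R V] = E[R] E[V] = 0`; what remains is a convex `g` with minimum `g 0 = 0`. For such `g` the map
`r ↦ g (r v)` is nondecreasing on `r ≥ 0` for every fixed `v`, so after conditioning on `V`
(independence and Tonelli) it suffices that `E φ(R₁) ≤ E φ(R₂)` for monotone `φ`. That follows from
the layer-cake formula, since the stochastic order compares `R₁` and `R₂` on every upper set.
-/

open Set Topology

lemma ConvexOn.add_rightDeriv_mul_sub_le {S : Set ℝ} {f : ℝ → ℝ} (hf : ConvexOn ℝ S f)
    {x₀ x : ℝ} (hx₀ : x₀ ∈ interior S) (hx : x ∈ S) :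
    f x₀ + derivWithin f (Ioi x₀) x₀ * (x - x₀) ≤ f x := by
  rcases lt_trichotomy x x₀ with hlt | rfl | hgt
  · have h := (hf.slope_le_leftDeriv_of_mem_interior hx hx₀ hlt).trans
      (hf.leftDeriv_le_rightDeriv_of_mem_interior hx₀)
    rw [slope_def_field, div_le_iff₀ (sub_pos.2 hlt)] at h
    linarith
  · simp
  · have h := hf.rightDeriv_le_slope_of_mem_interior hx₀ hx hgt
    rw [slope_def_field, le_div_iff₀ (sub_pos.2 hgt)] at h
    linarith

lemma ConvexOn.monotoneOn_comp_smul {E : Type*} [AddCommGroup E] [Module ℝ E] {g : E → ℝ}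
    (hg : ConvexOn ℝ univ g) (hg0 : ∀ y, g 0 ≤ g y) (x : E) :
    MonotoneOn (fun s : ℝ => g (s • x)) (Ici 0) := by
  intro s (hs : 0 ≤ s) t (ht : 0 ≤ t) hst
  rcases ht.eq_or_lt with rfl | htpos
  · rw [le_antisymm hst hs]
  have hst' : 0 ≤ 1 - s / t := sub_nonneg.2 ((div_le_one htpos).2 hst)
  calc g (s • x) = g ((s / t) • (t • x) + (1 - s / t) • (0 : E)) := by
        rw [smul_zero, add_zero, smul_smul, div_mul_cancel₀ _ htpos.ne']
    _ ≤ (s / t) • g (t • x) + (1 - s / t) • g 0 :=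
        hg.2 (mem_univ _) (mem_univ _) (div_nonneg hs ht) hst' (add_sub_cancel _ _)
    _ ≤ g (t • x) := by
        have := mul_nonneg hst' (sub_nonneg.2 (hg0 (t • x)))
        simp only [smul_eq_mul]
        linarith

lemma ProbabilityTheory.IndepFun.lintegral_comp_eq {Ω 𝓧 𝓨 : Type*} [MeasurableSpace Ω]
    [MeasurableSpace 𝓧] [MeasurableSpace 𝓨] {μ : Measure Ω} [IsFiniteMeasure μ]
    {X : Ω → 𝓧} {Y : Ω → 𝓨} (hXY : IndepFun X Y μ) (hX : Measurable X) (hY : Measurable Y)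
    {F : 𝓧 × 𝓨 → ENNReal} (hF : Measurable F) :
    ∫⁻ ω, F (X ω, Y ω) ∂μ = ∫⁻ y, ∫⁻ ω, F (X ω, y) ∂μ ∂(μ.map Y) := by
  rw [← lintegral_map hF (hX.prodMk hY),
    (indepFun_iff_map_prod_eq_prod_map_map hX.aemeasurable hY.aemeasurable).1 hXY,
    lintegral_prod_symm' _ hF]
  exact lintegral_congr fun y => lintegral_map (hF.comp measurable_prodMk_right) hX

lemma ProbabilityTheory.IndepFun.integral_comp_mul_eq_add_integral_sub_affine {Ω : Type*}
    [MeasurableSpace Ω] {μ : Measure Ω} [IsProbabilityMeasure μ] {R V : Ω → ℝ}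
    (hInd : IndepFun R V μ) (hR : Integrable R μ) (hV : Integrable V μ)
    (hEV : ∫ ω, V ω ∂μ = 0) {f : ℝ → ℝ} (hf : Integrable (fun ω => f (R ω * V ω)) μ) (a : ℝ) :
    ∫ ω, f (R ω * V ω) ∂μ = f 0 + ∫ ω, (f (R ω * V ω) - (f 0 + a * (R ω * V ω))) ∂μ := by
  have hRV : Integrable (fun ω => R ω * V ω) μ := hInd.integrable_mul hR hV
  have hRV0 : ∫ ω, R ω * V ω ∂μ = 0 := by
    rw [hInd.integral_fun_mul_eq_mul_integral hR.1 hV.1, hEV, mul_zero]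
  have haff : Integrable (fun ω => f 0 + a * (R ω * V ω)) μ :=
    (integrable_const _).add (hRV.const_mul a)
  rw [integral_sub hf haff, integral_add (integrable_const _) (hRV.const_mul a),
    integral_const_mul, hRV0]
  simp

namespace StOrder

variable {Ω : Type*} [MeasurableSpace Ω] {μ : Measure Ω} [IsFiniteMeasure μ] {R₁ R₂ : Ω → ℝ}

lemma measure_le_le (hst : StOrder μ R₁ R₂) (hR₁ : Measurable R₁) (hR₂ : Measurable R₂)
    (t : ℝ) : μ {ω | t ≤ R₁ ω} ≤ μ {ω | t ≤ R₂ ω} := by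
  have hlim : ∀ R : Ω → ℝ, Measurable R →
      Tendsto (fun r => μ {ω | t - r < R ω}) (𝓝[>] 0) (𝓝 (μ {ω | t ≤ R ω})) := by
    intro R hR
    have hIci : ⋂ r > (0 : ℝ), {ω | t - r < R ω} = {ω | t ≤ R ω} := by
      ext ω
      simp only [mem_iInter, mem_ofPred_eq, sub_lt_iff_lt_add]
      exact ⟨fun h => le_of_forall_pos_lt_add h, fun h r hr => by linarith⟩
    rw [← hIci]
    exact tendsto_measure_biInter_gt (fun r _ => (hR measurableSet_Ioi).nullMeasurableSet)
      (fun i j _ hij ω (hω : t - i < R ω) => (by linarith : t - j < R ω))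
      ⟨1, one_pos, measure_ne_top μ _⟩
  exact le_of_tendsto_of_tendsto (hlim R₁ hR₁) (hlim R₂ hR₂) (.of_forall fun r => hst _)

lemma measure_preimage_le_of_isUpperSet (hst : StOrder μ R₁ R₂) (hR₁ : Measurable R₁)
    (hR₂ : Measurable R₂) {U : Set ℝ} (hU : IsUpperSet U) :
    μ (R₁ ⁻¹' U) ≤ μ (R₂ ⁻¹' U) := by
  rcases U.eq_empty_or_nonempty with rfl | hne
  · simp
  by_cases hbdd : BddBelow U
  · have hIoi : Ioi (sInf U) ⊆ U := fun x hx =>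
      let ⟨u, hu, hux⟩ := exists_lt_of_csInf_lt hne hx
      hU hux.le hu
    by_cases hmem : sInf U ∈ U
    · have hUIci : U = Ici (sInf U) :=
        Subset.antisymm (fun _ => csInf_le hbdd) (hU.Ici_subset hmem)
      rw [hUIci]
      exact hst.measure_le_le hR₁ hR₂ _
    · have hUIoi : U = Ioi (sInf U) :=
        Subset.antisymm (fun x hx => (csInf_le hbdd hx).lt_of_ne fun h => hmem (h ▸ hx)) hIoi
      rw [hUIoi]
      exact hst _
  · have hUuniv : U = univ := eq_univ_iff_forall.2 fun x =>
      let ⟨u, hu, hux⟩ := not_bddBelow_iff.1 hbdd x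
      hU hux.le hu
    simp [hUuniv]

lemma lintegral_ofReal_comp_le (hst : StOrder μ R₁ R₂) (hR₁ : Measurable R₁)
    (hR₂ : Measurable R₂) {φ : ℝ → ℝ} (hφ : Monotone φ) :
    ∫⁻ ω, ENNReal.ofReal (φ (R₁ ω)) ∂μ ≤ ∫⁻ ω, ENNReal.ofReal (φ (R₂ ω)) ∂μ := by
  have hcake : ∀ R : Ω → ℝ, Measurable R → ∫⁻ ω, ENNReal.ofReal (φ (R ω)) ∂μ =
      ∫⁻ t in Ioi 0, μ (R ⁻¹' {x | t < max (φ x) 0}) := by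
    intro R hR
    simpa using lintegral_eq_lintegral_meas_lt μ (f := fun ω => max (φ (R ω)) 0)
      (.of_forall fun _ => le_max_right _ _)
      ((hφ.measurable.comp hR).max measurable_const).aemeasurable
  rw [hcake R₁ hR₁, hcake R₂ hR₂]
  exact lintegral_mono fun t => hst.measure_preimage_le_of_isUpperSet hR₁ hR₂
    fun x y hxy (hx : t < max (φ x) 0) => hx.trans_le (max_le_max (hφ hxy) le_rfl)

variable {V : Ω → ℝ}

lemma lintegral_ofReal_comp_mul_le (hst : StOrder μ R₁ R₂) (hR₁ : Measurable R₁)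
    (hR₂ : Measurable R₂) (hV : Measurable V) (hR₁0 : ∀ ω, 0 ≤ R₁ ω) (hR₂0 : ∀ ω, 0 ≤ R₂ ω)
    (hInd₁ : IndepFun R₁ V μ) (hInd₂ : IndepFun R₂ V μ)
    {g : ℝ → ℝ} (hg : ConvexOn ℝ univ g) (hg0 : ∀ x, g 0 ≤ g x) :
    ∫⁻ ω, ENNReal.ofReal (g (R₁ ω * V ω)) ∂μ ≤ ∫⁻ ω, ENNReal.ofReal (g (R₂ ω * V ω)) ∂μ := by
  have hgc : Continuous g := continuousOn_univ.1 (hg.continuousOn isOpen_univ)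
  have hF : Measurable fun p : ℝ × ℝ => ENNReal.ofReal (g (p.1 * p.2)) := by fun_prop
  rw [hInd₁.lintegral_comp_eq hR₁ hV hF, hInd₂.lintegral_comp_eq hR₂ hV hF]
  refine lintegral_mono fun v => ?_
  have hmono : Monotone fun r => g (max r 0 * v) := fun r s hrs =>
    hg.monotoneOn_comp_smul hg0 v (le_max_right r 0) (le_max_right s 0) (max_le_max_right 0 hrs)
  simpa only [max_eq_left (hR₁0 _), max_eq_left (hR₂0 _)] using
    hst.lintegral_ofReal_comp_le hR₁ hR₂ hmono

lemma integral_comp_mul_le (hst : StOrder μ R₁ R₂) (hR₁ : Measurable R₁)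
    (hR₂ : Measurable R₂) (hV : Measurable V) (hR₁0 : ∀ ω, 0 ≤ R₁ ω) (hR₂0 : ∀ ω, 0 ≤ R₂ ω)
    (hInd₁ : IndepFun R₁ V μ) (hInd₂ : IndepFun R₂ V μ)
    {g : ℝ → ℝ} (hg : ConvexOn ℝ univ g) (hg0 : g 0 = 0) (hg_nonneg : ∀ x, 0 ≤ g x)
    (hg₂ : Integrable (fun ω => g (R₂ ω * V ω)) μ) :
    ∫ ω, g (R₁ ω * V ω) ∂μ ≤ ∫ ω, g (R₂ ω * V ω) ∂μ := by
  have hgc : Continuous g := continuousOn_univ.1 (hg.continuousOn isOpen_univ)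
  have hg₁ : AEStronglyMeasurable (fun ω => g (R₁ ω * V ω)) μ :=
    (hgc.measurable.comp (hR₁.mul hV)).aestronglyMeasurable
  rw [integral_eq_lintegral_of_nonneg_ae (.of_forall fun _ => hg_nonneg _) hg₁,
    integral_eq_lintegral_of_nonneg_ae (.of_forall fun _ => hg_nonneg _) hg₂.1]
  exact ENNReal.toReal_mono hg₂.lintegral_lt_top.ne
    (hst.lintegral_ofReal_comp_mul_le hR₁ hR₂ hV hR₁0 hR₂0 hInd₁ hInd₂ hg
      fun x => hg0.le.trans (hg_nonneg x))

end StOrder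

theorem cx_of_mul_st
    {Ω : Type*} [MeasurableSpace Ω] (μ : Measure Ω) [IsProbabilityMeasure μ]
    (R₁ R₂ V : Ω → ℝ)
    (hR₁m : Measurable R₁) (hR₂m : Measurable R₂) (hVm : Measurable V)
    (hR₁0 : ∀ ω, 0 ≤ R₁ ω) (hR₂0 : ∀ ω, 0 ≤ R₂ ω)
    (hR₁i : Integrable R₁ μ) (hR₂i : Integrable R₂ μ) (hVi : Integrable V μ)
    (hInd₁ : IndepFun R₁ V μ) (hInd₂ : IndepFun R₂ V μ)
    (hEV : ∫ ω, V ω ∂μ = 0)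
    (hst : StOrder μ R₁ R₂) :
    ∀ f : ℝ → ℝ, ConvexOn ℝ Set.univ f →
      Integrable (fun ω => f (R₁ ω * V ω)) μ →
      Integrable (fun ω => f (R₂ ω * V ω)) μ →
      ∫ ω, f (R₁ ω * V ω) ∂μ ≤ ∫ ω, f (R₂ ω * V ω) ∂μ := by
  intro f hf hf₁ hf₂
  set a := derivWithin f (Ioi 0) 0
  set g : ℝ → ℝ := fun x => f x - (f 0 + a * x)
  have hg : ConvexOn ℝ univ g :=
    hf.sub ((concaveOn_const _ convex_univ).add ((LinearMap.mul ℝ ℝ a).concaveOn convex_univ))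
  have hg_nonneg : ∀ x, 0 ≤ g x := fun x =>
    sub_nonneg.2 (by simpa using hf.add_rightDeriv_mul_sub_le (x₀ := 0) (by simp) (mem_univ x))
  have hg₂ : Integrable (fun ω => g (R₂ ω * V ω)) μ :=
    hf₂.sub ((integrable_const _).add ((hInd₂.integrable_mul hR₂i hVi).const_mul a))
  rw [hInd₁.integral_comp_mul_eq_add_integral_sub_affine hR₁i hVi hEV hf₁ a,
    hInd₂.integral_comp_mul_eq_add_integral_sub_affine hR₂i hVi hEV hf₂ a]
  exact (add_le_add_iff_left _).2 <| hst.integral_comp_mul_le hR₁m hR₂m hVm hR₁0 hR₂0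
    hInd₁ hInd₂ hg (by simp [g]) hg_nonneg hg₂
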